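/- arXiv:1303.5305 — 4 statements merged into one kernel-verified Lean document; each statement's English description precedes it below -/
import Mathlib

section
/- Let p > 1 be real, and let z ∈ ℝ^n be a vector with at least two nonzero components, and let i be an index with z_i > 0. Then there exists λ ∈ ℝ such that ‖e_i - λ z‖_p^p < 1. -/
/-!
Along the ray `t ↦ tz`, `t > 0` small, the `i`-th term is `(1 - t zᵢ)ᵖ ≤ 1 - t zᵢ`, while all other
terms together contribute `tᵖ C` with `C = ∑_{j ≠ i} |z_j|ᵖ`. As `p > 1`, `tᵖ C = t · t^(p-1) C`
is `o(t)`, so it is eventually smaller than the gain `t zᵢ`.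
-/

open Filter Topology Finset

theorem sum_abs_single_sub_mul_rpow {ι : Type*} [Fintype ι] [DecidableEq ι] (i : ι)
    (z : ι → ℝ) (t p : ℝ) :
    ∑ j, |(Pi.single i (1 : ℝ) : ι → ℝ) j - t * z j| ^ p
      = |1 - t * z i| ^ p + |t| ^ p * ∑ j ∈ univ.erase i, |z j| ^ p := by
  rw [← add_sum_erase _ _ (mem_univ i), Pi.single_eq_same, mul_sum]
  congr 1
  refine sum_congr rfl fun j hj => ?_
  rw [Pi.single_eq_of_ne (ne_of_mem_erase hj), zero_sub, abs_neg, abs_mul,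
    Real.mul_rpow (abs_nonneg t) (abs_nonneg _)]

theorem eventually_rpow_mul_lt_mul {p : ℝ} (hp : 1 < p) (C : ℝ) {a : ℝ} (ha : 0 < a) :
    ∀ᶠ t in 𝓝[>] 0, t ^ p * C < t * a := by
  have hlim : Tendsto (fun t : ℝ => t ^ (p - 1) * C) (𝓝[>] 0) (𝓝 0) := by
    have := ((Real.continuousAt_rpow_const 0 (p - 1) (.inr (by linarith))).tendsto.mul_const C)
    simpa [Real.zero_rpow (by linarith : p - 1 ≠ 0)] using this.mono_left nhdsWithin_le_nhds
  filter_upwards [hlim.eventually (gt_mem_nhds ha), self_mem_nhdsWithin] with t hlt (ht : 0 < t)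
  calc t ^ p * C = t * (t ^ (p - 1) * C) := by
        rw [Real.rpow_sub_one ht.ne']; field_simp
    _ < t * a := mul_lt_mul_of_pos_left hlt ht

theorem exists_scaling_lt_one_general {n : ℕ} (p : ℝ) (hp : 1 < p) (z : Fin n → ℝ)
    (i : Fin n) (hzi : 0 < z i) :
    ∃ lam : ℝ, ∑ j, |(Pi.single i (1 : ℝ) : Fin n → ℝ) j - lam * z j| ^ p < 1 := by
  set C := ∑ j ∈ univ.erase i, |z j| ^ p
  have hsmall : ∀ᶠ t in 𝓝[>] 0, t * z i < 1 :=
    nhdsWithin_le_nhds <| (continuous_id.mul continuous_const).tendsto' 0 0 (zero_mul _)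
      |>.eventually (gt_mem_nhds one_pos)
  obtain ⟨t, hgain, hstep, ht : 0 < t⟩ := (eventually_rpow_mul_lt_mul hp C hzi |>.and <|
    hsmall.and self_mem_nhdsWithin).exists
  refine ⟨t, ?_⟩
  have hzt : 0 < t * z i := mul_pos ht hzi
  have hfirst : |1 - t * z i| ^ p ≤ 1 - t * z i := by
    rw [abs_of_pos (by linarith)]
    exact Real.rpow_le_self_of_le_one (by linarith) (by linarith) hp.le
  rw [sum_abs_single_sub_mul_rpow, abs_of_pos ht]
  linarith

theorem exists_scaling_lt_one {n : ℕ} (p : ℝ) (hp : 1 < p) (z : Fin n → ℝ)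
    (htwo : ∃ j k : Fin n, j ≠ k ∧ z j ≠ 0 ∧ z k ≠ 0) (i : Fin n) (hzi : 0 < z i) :
    ∃ lam : ℝ, ∑ j, |(Pi.single i (1 : ℝ) : Fin n → ℝ) j - lam * z j| ^ p < 1 :=
  exists_scaling_lt_one_general p hp z i hzi
end

section
/- Let z ∈ ℝ^n be a nonzero vector and p > 1 real. Then there exist an index i and a scalar λ ∈ ℝ such that ‖e_i - λ z‖_p^p < 1. -/
/-! Take `i` with `z i ≠ 0` and `λ = t / z i`. The `p`-th power distance is then
`(1 - t) ^ p + C t ^ p` with `C = ∑_{j ≠ i} |z j / z i| ^ p`, and for small `t > 0` the linear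
gain `(1 - t) ^ p ≤ 1 - t` beats the loss `C t ^ p = o(t)`, because `p > 1`. -/

open Filter Topology Finset

lemma sum_abs_single_sub_div_mul_rpow {ι : Type*} [Fintype ι] [DecidableEq ι] {z : ι → ℝ}
    {i : ι} (hi : z i ≠ 0) (t p : ℝ) :
    ∑ j, |(Pi.single i (1 : ℝ) : ι → ℝ) j - t / z i * z j| ^ p =
      |1 - t| ^ p + (∑ j ∈ {i}ᶜ, |z j / z i| ^ p) * |t| ^ p := by
  rw [Fintype.sum_eq_add_sum_compl i, Pi.single_eq_same, div_mul_cancel₀ t hi, sum_mul]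
  congr 1
  refine sum_congr rfl fun j hj => ?_
  have hji : j ≠ i := by simpa using hj
  rw [Pi.single_eq_of_ne hji, zero_sub, abs_neg, ← Real.mul_rpow (abs_nonneg _) (abs_nonneg _),
    ← abs_mul, div_mul_comm]

lemma eventually_abs_one_sub_rpow_add_mul_abs_rpow_lt_one {p : ℝ} (hp : 1 < p) (C : ℝ) :
    ∀ᶠ t in 𝓝[>] (0 : ℝ), |1 - t| ^ p + C * |t| ^ p < 1 := by
  have hsmall : ∀ᶠ t in 𝓝[>] (0 : ℝ), C * t ^ (p - 1) < 1 := by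
    have hcont : Tendsto (fun t : ℝ => C * t ^ (p - 1)) (𝓝 0) (𝓝 (C * 0 ^ (p - 1))) :=
      ((Real.continuousAt_rpow_const 0 (p - 1) (Or.inr (by linarith))).const_mul C).tendsto
    rw [Real.zero_rpow (by linarith), mul_zero] at hcont
    exact nhdsWithin_le_nhds (hcont.eventually_lt_const one_pos)
  filter_upwards [hsmall, self_mem_nhdsWithin, Ioo_mem_nhdsGT one_pos] with t hCt ht₀ ht₁
  have ht : 0 < t := ht₀
  rw [abs_of_pos (sub_pos.2 ht₁.2), abs_of_pos ht]
  have hlinear : (1 - t) ^ p ≤ 1 - t :=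
    Real.rpow_le_self_of_le_one (by linarith [ht₁.2]) (by linarith) hp.le
  have hsuperlinear : C * t ^ p < t := by
    calc C * t ^ p = t * (C * t ^ (p - 1)) := by
          rw [Real.rpow_sub_one ht.ne']; field_simp
      _ < t * 1 := mul_lt_mul_of_pos_left hCt ht
      _ = t := mul_one t
  linarith

theorem exists_unit_vector_close {n : ℕ} (p : ℝ) (hp : 1 < p) (z : Fin n → ℝ) (hz : z ≠ 0) :
    ∃ (i : Fin n) (lam : ℝ), ∑ j, |(Pi.single i (1 : ℝ) : Fin n → ℝ) j - lam * z j| ^ p < 1 := by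
  obtain ⟨i, hi⟩ := Function.ne_iff.mp hz
  obtain ⟨t, ht⟩ := (eventually_abs_one_sub_rpow_add_mul_abs_rpow_lt_one hp
    (∑ j ∈ {i}ᶜ, |z j / z i| ^ p)).exists
  exact ⟨i, t / z i, by rwa [sum_abs_single_sub_div_mul_rpow hi]⟩
end

section
/- Let n ≥ 2, let 𝟙 ∈ ℝ^n be the all-ones vector, and let 0 < p ≤ 1. Then for every index i and every λ ∈ ℝ, ‖e_i - λ𝟙‖_p^p = |1-λ|^p + (n-1)|λ|^p ≥ 1. -/
theorem Fintype.sum_comp_pi_single {ι M : Type*} [Fintype ι] [DecidableEq ι] [Zero M]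
    (g : M → ℝ) (i : ι) (a : M) :
    ∑ j, g ((Pi.single i a : ι → M) j) = g a + (Fintype.card ι - 1 : ℝ) * g 0 := by
  have hcard : (Finset.univ.erase i).card = Fintype.card ι - 1 :=
    Finset.card_erase_of_mem (Finset.mem_univ i)
  have hpos : 1 ≤ Fintype.card ι := Fintype.card_pos_iff.mpr ⟨i⟩
  rw [← Finset.add_sum_erase _ _ (Finset.mem_univ i), Pi.single_eq_same,
    Finset.sum_congr rfl fun j hj => by rw [Pi.single_eq_of_ne (Finset.ne_of_mem_erase hj)],
    Finset.sum_const, hcard, nsmul_eq_mul, Nat.cast_sub hpos, Nat.cast_one]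

theorem Real.abs_add_rpow_le {p : ℝ} (hp0 : 0 ≤ p) (hp1 : p ≤ 1) (a b : ℝ) :
    |a + b| ^ p ≤ |a| ^ p + |b| ^ p :=
  (Real.rpow_le_rpow (abs_nonneg _) (abs_add_le a b) hp0).trans
    (Real.rpow_add_le_add_rpow (abs_nonneg a) (abs_nonneg b) hp0 hp1)

theorem all_ones_counterexample {n : ℕ} (hn : 2 ≤ n) (p : ℝ) (hp0 : 0 < p) (hp1 : p ≤ 1)
    (i : Fin n) (lam : ℝ) :
    (∑ j, |(Pi.single i (1 : ℝ) : Fin n → ℝ) j - lam * 1| ^ p = |1 - lam| ^ p + (n - 1 : ℝ) * |lam| ^ p) ∧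
      1 ≤ |1 - lam| ^ p + (n - 1 : ℝ) * |lam| ^ p := by
  refine ⟨by simpa using Fintype.sum_comp_pi_single (fun x => |x - lam * 1| ^ p) i 1, ?_⟩
  have h_subadd : 1 ≤ |1 - lam| ^ p + |lam| ^ p := by
    simpa using Real.abs_add_rpow_le hp0.le hp1 (1 - lam) lam
  have h_mul : |lam| ^ p ≤ (n - 1 : ℝ) * |lam| ^ p :=
    le_mul_of_one_le_left (by positivity) (by
      have : (2 : ℝ) ≤ n := by exact_mod_cast hn
      linarith)
  linarith
end

section
/- Let A ∈ ℝ^{r×n} and K ∈ ℕ. Define f_i = inf{‖e_i - z‖_2^2 : ‖Az‖_0 ≤ K} for i = 1,…,n and f = min_i f_i. Then f < 1 if and only if there exists a nonzero z ∈ ℝ^n with ‖Az‖_0 ≤ K (i.e., z violates at most K of the equations Az = 0). -/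
/-!
The feasible set `{z | ‖Az‖₀ ≤ K}` is a cone containing `0`. Expanding the square,
`‖eᵢ - z‖² = 1 - 2 zᵢ + ‖z‖²`, so a feasible `z` with `zᵢ = 0` costs at least `1`, while a feasible
`z` with `zᵢ ≠ 0` spans a line on which the projection `(zᵢ / ‖z‖²) z` of `eᵢ` is feasible and costs
`1 - zᵢ² / ‖z‖² < 1`. Hence `fᵢ < 1` iff some feasible vector has a nonzero `i`-th coordinate.
-/

/-- number of nonzero entries of a vector -/
noncomputable def l0 {m : ℕ} (v : Fin m → ℝ) : ℕ := (Finset.univ.filter (fun j => v j ≠ 0)).card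

open Finset

lemma l0_smul_le {m : ℕ} (c : ℝ) (v : Fin m → ℝ) : l0 (c • v) ≤ l0 v :=
  card_le_card fun j hj => by
    simp only [mem_filter, Pi.smul_apply, smul_eq_mul] at hj ⊢
    exact ⟨hj.1, right_ne_zero_of_mul hj.2⟩

lemma l0_zero {m : ℕ} : l0 (0 : Fin m → ℝ) = 0 := by
  simp [l0]

lemma sum_sq_single_sub {n : ℕ} (i : Fin n) (w : Fin n → ℝ) :
    ∑ j, ((Pi.single i (1 : ℝ) : Fin n → ℝ) j - w j) ^ 2 = 1 - 2 * w i + ∑ j, w j ^ 2 := by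
  simp only [sub_sq, sum_add_distrib, sum_sub_distrib, Pi.single_apply]
  simp [mul_comm]

lemma sum_sq_single_sub_proj {n : ℕ} (i : Fin n) (z : Fin n → ℝ)
    (hS : 0 < ∑ j, z j ^ 2) :
    ∑ j, ((Pi.single i (1 : ℝ) : Fin n → ℝ) j - ((z i / ∑ j, z j ^ 2) • z) j) ^ 2
      = 1 - z i ^ 2 / ∑ j, z j ^ 2 := by
  simp only [sum_sq_single_sub, Pi.smul_apply, smul_eq_mul, mul_pow, ← mul_sum]
  field_simp
  ring

theorem sInf_sum_sq_single_sub_lt_one_iff {n : ℕ} (P : (Fin n → ℝ) → Prop) (i : Fin n)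
    (h0 : P 0) (hsmul : ∀ (c : ℝ) z, P z → P (c • z)) :
    sInf {t : ℝ | ∃ z, P z ∧ t = ∑ j, ((Pi.single i (1 : ℝ) : Fin n → ℝ) j - z j) ^ 2} < 1
      ↔ ∃ z, P z ∧ z i ≠ 0 := by
  set T := {t : ℝ | ∃ z, P z ∧ t = ∑ j, ((Pi.single i (1 : ℝ) : Fin n → ℝ) j - z j) ^ 2}
  constructor
  · intro hlt
    have hone : (1 : ℝ) ∈ T := ⟨0, h0, by rw [sum_sq_single_sub]; simp⟩
    obtain ⟨_, ⟨z, hz, rfl⟩, hzlt⟩ := exists_lt_of_csInf_lt ⟨1, hone⟩ hlt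
    refine ⟨z, hz, fun hzi => hzlt.not_ge ?_⟩
    rw [sum_sq_single_sub, hzi]
    have : 0 ≤ ∑ j, z j ^ 2 := sum_nonneg fun j _ => sq_nonneg (z j)
    linarith
  · rintro ⟨z, hz, hzi⟩
    have hS : 0 < ∑ j, z j ^ 2 :=
      sum_pos' (fun j _ => sq_nonneg (z j)) ⟨i, mem_univ i, by positivity⟩
    have hbdd : BddBelow T := ⟨0, by rintro _ ⟨w, _, rfl⟩; positivity⟩
    calc sInf T ≤ 1 - z i ^ 2 / ∑ j, z j ^ 2 :=
          csInf_le hbdd ⟨_, hsmul _ z hz, (sum_sq_single_sub_proj i z hS).symm⟩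
      _ < 1 := sub_lt_self 1 (by positivity)

theorem reduction_equivalence {r n : ℕ} (A : Matrix (Fin r) (Fin n) ℝ) (K : ℕ) :
    (∃ i : Fin n,
        sInf {t : ℝ | ∃ z : Fin n → ℝ, l0 (A.mulVec z) ≤ K ∧
          t = ∑ j, ((Pi.single i (1 : ℝ) : Fin n → ℝ) j - z j) ^ 2} < 1)
      ↔ ∃ z : Fin n → ℝ, z ≠ 0 ∧ l0 (A.mulVec z) ≤ K := by
  have h0 : l0 (A.mulVec 0) ≤ K := by simp [l0_zero]
  have hsmul (c : ℝ) (z : Fin n → ℝ) (hz : l0 (A.mulVec z) ≤ K) : l0 (A.mulVec (c • z)) ≤ K :=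
    (Matrix.mulVec_smul A c z ▸ l0_smul_le c _).trans hz
  simp only [sInf_sum_sq_single_sub_lt_one_iff _ _ h0 hsmul, Function.ne_iff]
  exact ⟨fun ⟨i, z, hz, hzi⟩ => ⟨z, ⟨i, hzi⟩, hz⟩, fun ⟨z, ⟨i, hzi⟩, hz⟩ => ⟨i, z, hz, hzi⟩⟩
end
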